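/- arXiv:2510.25956 — 2 statements merged into one kernel-verified Lean document; each statement's English description precedes it below -/
import Mathlib

section
/- Let f : ℝᵈ → ℝ be α-strongly convex and β-smooth with minimizer y*. For the rejection sampler with proposal N(y*, (1/α)I) and acceptance probability a(y) = exp(−f(y)+f(y*)+(α/2)‖y−y*‖²), the acceptance probability is at least (α/β)^{d/2}; hence the expected number of trials until acceptance is at most (β/α)^{d/2}. -/
/-!
Strong convexity at the minimizer gives `f y ≥ f y* + (α/2)‖y - y*‖²`, and the descent lemma
for the `β`-Lipschitz gradient (which vanishes at `y*`) gives `f y ≤ f y* + (β/2)‖y - y*‖²`.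
The product `a·p` equals `(α/2π)^{d/2} exp (f y* - f y)`: the first bound makes it integrable,
the second bounds its integral below by `(α/2π)^{d/2}` times the Gaussian integral
`(2π/β)^{d/2}`, which is `(α/β)^{d/2}`.
-/

open MeasureTheory Real

variable {E : Type*}

section Growth

variable [NormedAddCommGroup E] [NormedSpace ℝ E]

theorem UniformConvexOn.add_le_of_isMinOn {s : Set E} {φ : ℝ → ℝ} {f : E → ℝ}
    (hf : UniformConvexOn s φ f) {x₀ : E} (hmin : IsMinOn f s x₀) (hx₀ : x₀ ∈ s)
    {y : E} (hy : y ∈ s) : f x₀ + φ ‖y - x₀‖ ≤ f y := by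
  set c := φ ‖y - x₀‖
  -- Compare `f x₀` with `f` at the point `(1 - t) y + t x₀` and let `t → 1`.
  have hnear : ∀ t ∈ Set.Ioo (0 : ℝ) 1, f x₀ + t * c ≤ f y := by
    intro t ⟨ht₀, ht₁⟩
    have h₁ : 0 ≤ 1 - t := sub_nonneg.2 ht₁.le
    have hle : f x₀ ≤ f ((1 - t) • y + t • x₀) :=
      hmin (hf.1 hy hx₀ h₁ ht₀.le (sub_add_cancel 1 t))
    have hconv := hf.2 hy hx₀ h₁ ht₀.le (sub_add_cancel 1 t)
    simp only [smul_eq_mul] at hconv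
    have : (1 - t) * (f x₀ + t * c) ≤ (1 - t) * f y := by linarith
    exact le_of_mul_le_mul_left this (sub_pos.2 ht₁)
  have hlim : Filter.Tendsto (fun t : ℝ => f x₀ + t * c) (nhdsWithin 1 (Set.Iio 1))
      (nhds (f x₀ + 1 * c)) :=
    ((continuous_const.add (continuous_id.mul continuous_const)).tendsto 1).mono_left
      nhdsWithin_le_nhds
  simpa using le_of_tendsto hlim
    (Filter.eventually_of_mem (Ioo_mem_nhdsLT zero_lt_one) hnear)

end Growth

section Descent

variable [NormedAddCommGroup E] [InnerProductSpace ℝ E] [CompleteSpace E]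

theorem le_add_inner_add_sq_norm_of_lipschitzWith_gradient {f : E → ℝ} {L : NNReal}
    (hf : Differentiable ℝ f) (hL : LipschitzWith L (gradient f)) (x y : E) :
    f y ≤ f x + inner ℝ (gradient f x) (y - x) + L / 2 * ‖y - x‖ ^ 2 := by
  set v := y - x
  have hline : ∀ t : ℝ, HasDerivAt (fun t : ℝ => f (x + t • v))
      (inner ℝ (gradient f (x + t • v)) v) t := by
    intro t
    have hpath : HasDerivAt (fun t : ℝ => x + t • v) v t := by
      simpa using ((hasDerivAt_id t).smul_const v).const_add x
    simpa only [Function.comp_def, InnerProductSpace.toDual_apply_apply] using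
      (hf (x + t • v)).hasGradientAt.hasFDerivAt.comp_hasDerivAt t hpath
  set F : ℝ → ℝ :=
    fun t => f (x + t • v) - t * inner ℝ (gradient f x) v - L / 2 * t ^ 2 * ‖v‖ ^ 2
  have hF : ∀ t : ℝ, HasDerivAt F
      (inner ℝ (gradient f (x + t • v) - gradient f x) v - L * t * ‖v‖ ^ 2) t := by
    intro t
    refine (((hline t).sub ((hasDerivAt_id' t).mul_const _)).sub
      (((hasDerivAt_pow 2 t).const_mul (L / 2 : ℝ)).mul_const (‖v‖ ^ 2))).congr_deriv ?_
    rw [inner_sub_left]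
    ring
  have hanti : AntitoneOn F (Set.Icc 0 1) := by
    refine antitoneOn_of_deriv_nonpos (convex_Icc 0 1)
      (fun t _ => (hF t).continuousAt.continuousWithinAt)
      (fun t _ => (hF t).differentiableAt.differentiableWithinAt) fun t ht => ?_
    rw [interior_Icc] at ht
    rw [(hF t).deriv, sub_nonpos]
    calc inner ℝ (gradient f (x + t • v) - gradient f x) v
        ≤ ‖gradient f (x + t • v) - gradient f x‖ * ‖v‖ := real_inner_le_norm _ _
      _ ≤ L * ‖(x + t • v) - x‖ * ‖v‖ := by
          gcongr
          simpa only [dist_eq_norm] using hL.dist_le_mul (x + t • v) x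
      _ = L * t * ‖v‖ ^ 2 := by
          rw [add_sub_cancel_left, norm_smul, Real.norm_of_nonneg ht.1.le]
          ring
  have h01 := hanti (Set.left_mem_Icc.2 zero_le_one) (Set.right_mem_Icc.2 zero_le_one) zero_le_one
  simp only [F, one_smul, zero_smul, add_zero, one_pow, one_mul, zero_mul, sub_zero,
    add_sub_cancel, v] at h01
  linarith

end Descent

section Gaussian

variable [NormedAddCommGroup E] [InnerProductSpace ℝ E] [FiniteDimensional ℝ E]
  [MeasurableSpace E] [BorelSpace E]

theorem integral_exp_neg_mul_sq_norm_sub {b : ℝ} (hb : 0 < b) (c : E) :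
    ∫ y : E, exp (-b * ‖y - c‖ ^ 2) = (π / b) ^ (Module.finrank ℝ E / 2 : ℝ) := by
  rw [integral_sub_right_eq_self (fun v : E => exp (-b * ‖v‖ ^ 2)) c,
    GaussianFourier.integral_rexp_neg_mul_sq_norm hb]

theorem integrable_exp_neg_mul_sq_norm_sub {b : ℝ} (hb : 0 < b) (c : E) :
    Integrable fun y : E => exp (-b * ‖y - c‖ ^ 2) :=
  .of_integral_ne_zero (by rw [integral_exp_neg_mul_sq_norm_sub hb]; positivity)

variable {f : E → ℝ} {c : E}

theorem integrable_exp_sub_of_quadratic_growth (hf : Continuous f) {m : ℝ} (hm : 0 < m)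
    (hgrowth : ∀ y, f c + m / 2 * ‖y - c‖ ^ 2 ≤ f y) :
    Integrable fun y => exp (f c - f y) := by
  refine (integrable_exp_neg_mul_sq_norm_sub (half_pos hm) c).mono'
    (by fun_prop) (Filter.Eventually.of_forall fun y => ?_)
  rw [Real.norm_of_nonneg (exp_nonneg _), exp_le_exp]
  linarith [hgrowth y]

theorem le_integral_exp_sub_of_le_quadratic (hint : Integrable fun y => exp (f c - f y))
    {L : ℝ} (hL : 0 < L) (hbound : ∀ y, f y ≤ f c + L / 2 * ‖y - c‖ ^ 2) :
    (2 * π / L) ^ (Module.finrank ℝ E / 2 : ℝ) ≤ ∫ y, exp (f c - f y) := by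
  calc (2 * π / L) ^ (Module.finrank ℝ E / 2 : ℝ) = ∫ y, exp (-(L / 2) * ‖y - c‖ ^ 2) := by
        rw [integral_exp_neg_mul_sq_norm_sub (half_pos hL), div_div_eq_mul_div, mul_comm]
    _ ≤ ∫ y, exp (f c - f y) :=
        integral_mono (integrable_exp_neg_mul_sq_norm_sub (half_pos hL) c) hint fun y => by
          simp only [exp_le_exp]; linarith [hbound y]

end Gaussian

/-- For the rejection sampler of STATEMENT 16, the overall acceptance
probability `∫ a·p` is at least `(α/β)^{d/2}`; hence the expected number of trials until
acceptance, `(∫ a·p)⁻¹`, is at most `(β/α)^{d/2}`. -/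
theorem stmt17 {d : ℕ} (f : EuclideanSpace ℝ (Fin d) → ℝ) (al be : ℝ)
    (hal : 0 < al) (hab : al ≤ be)
    (hdiff : ContDiff ℝ 2 f)
    (hconv : StrongConvexOn Set.univ al f)
    (hsmooth : LipschitzWith (Real.toNNReal be) (gradient f))
    (ystar : EuclideanSpace ℝ (Fin d)) (hmin : IsMinOn f Set.univ ystar)
    (a p : EuclideanSpace ℝ (Fin d) → ℝ)
    (ha : ∀ y, a y = Real.exp (-f y + f ystar + (al / 2) * ‖y - ystar‖ ^ 2))
    (hp : ∀ y, p y = (al / (2 * Real.pi)) ^ ((d : ℝ) / 2) *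
        Real.exp (-(al / 2) * ‖y - ystar‖ ^ 2)) :
    (al / be) ^ ((d : ℝ) / 2) ≤ (∫ y, a y * p y) ∧
    (∫ y, a y * p y)⁻¹ ≤ (be / al) ^ ((d : ℝ) / 2) := by
  have hbe : 0 < be := hal.trans_le hab
  have hf : Differentiable ℝ f := hdiff.differentiable two_ne_zero
  have hcrit : gradient f ystar = 0 := by
    simp [gradient, (hmin.isLocalMin Filter.univ_mem).fderiv_eq_zero]
  have hap : (fun y => a y * p y) =
      fun y => (al / (2 * π)) ^ ((d : ℝ) / 2) * exp (f ystar - f y) := by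
    ext y
    rw [ha, hp, mul_left_comm, ← exp_add]
    ring_nf
  have hint := integrable_exp_sub_of_quadratic_growth hf.continuous hal
    fun y => hconv.add_le_of_isMinOn hmin (Set.mem_univ _) (Set.mem_univ y)
  have hlow := le_integral_exp_sub_of_le_quadratic hint hbe fun y => by
    simpa [hcrit, Real.coe_toNNReal be hbe.le] using
      le_add_inner_add_sq_norm_of_lipschitzWith_gradient hf hsmooth ystar y
  rw [finrank_euclideanSpace_fin] at hlow
  have hacc : (al / be) ^ ((d : ℝ) / 2) ≤ ∫ y, a y * p y :=
    calc (al / be) ^ ((d : ℝ) / 2)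
        = (al / (2 * π)) ^ ((d : ℝ) / 2) * (2 * π / be) ^ ((d : ℝ) / 2) := by
          rw [← mul_rpow (by positivity) (by positivity)]
          field_simp
      _ ≤ ∫ y, a y * p y := by
          rw [hap, integral_const_mul]
          gcongr
  refine ⟨hacc, (inv_anti₀ (by positivity) hacc).trans_eq ?_⟩
  rw [← inv_rpow (by positivity), inv_div]
end

section
/- (Laplace/Gibbs limit) Let V : ℝᵈ → ℝ be continuous with unique global minimizer x*, growing at infinity so that ∫ e^{−V/ε} dy < ∞ for all small ε > 0. Then the Gibbs measures π_ε ∝ e^{−V/ε} converge weakly to the Dirac mass δ_{x*} as ε → 0⁺. -/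
/-!
Write the Gibbs weights in inverse temperature, `exp (-β V)`, and fix a reference `β₁` at which
they are integrable. Factoring `exp (-β V) = exp (-(β - β₁) V) * exp (-β₁ V)` compares every
weight with the reference one. Coercivity and the strict minimum at `x*` give a gap `m > 0`
with `V ≥ V x* + m` off any neighbourhood `U` of `x*`, while `V < V x* + m / 2` on an open
neighbourhood `W` of `x*`, which has positive measure. Hence the mass outside `U` is at most
`exp (-(β - β₁) (V x* + m)) * C` and the total mass is at least
`exp (-(β - β₁) (V x* + m / 2)) * c` with `c > 0`, so the Gibbs measure of `Uᶜ` is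
`O(exp (-(β - β₁) m / 2)) → 0`. A bounded function continuous at `x*` then has Gibbs averages
tending to its value at `x*`.
-/

open MeasureTheory Real Filter Topology

noncomputable section

theorem exists_pos_add_le_of_tendsto_cocompact {X : Type*} [TopologicalSpace X] {V : X → ℝ}
    (hV : Continuous V) (hcoer : Tendsto V (cocompact X) atTop) {x : X}
    (hmin : ∀ y, y ≠ x → V x < V y) {U : Set X} (hU : U ∈ 𝓝 x) :
    ∃ m, 0 < m ∧ ∀ y ∉ U, V x + m ≤ V y := by
  obtain ⟨K, hK, hKV⟩ := mem_cocompact.1 (hcoer.eventually (eventually_ge_atTop (V x + 1)))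
  have hnotK : ∀ y ∉ U, y ∉ K → V x + 1 ≤ V y := fun y _ hyK => hKV hyK
  rcases (K \ interior U).eq_empty_or_nonempty with hempty | hne
  · refine ⟨1, one_pos, fun y hy => hnotK y hy fun hyK => ?_⟩
    exact hempty.subset ⟨hyK, fun h => hy (interior_subset h)⟩
  · obtain ⟨y₀, ⟨-, hy₀U⟩, hy₀min⟩ :=
      (hK.diff isOpen_interior).exists_isMinOn hne hV.continuousOn
    have hy₀x : y₀ ≠ x := by rintro rfl; exact hy₀U (mem_interior_iff_mem_nhds.2 hU)
    refine ⟨min 1 (V y₀ - V x), lt_min one_pos (sub_pos.2 (hmin y₀ hy₀x)), fun y hy => ?_⟩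
    by_cases hyK : y ∈ K
    · have : V y₀ ≤ V y := hy₀min ⟨hyK, fun h => hy (interior_subset h)⟩
      linarith [min_le_right 1 (V y₀ - V x)]
    · linarith [hnotK y hy hyK, min_le_left 1 (V y₀ - V x)]

theorem exp_neg_mul_eq_mul_exp_neg_mul (β β₁ v : ℝ) :
    exp (-β * v) = exp (-(β - β₁) * v) * exp (-β₁ * v) := by
  rw [← exp_add]; ring_nf

section GibbsWeights

variable {X : Type*} [MeasurableSpace X] {μ : Measure X} {V : X → ℝ} {s : Set X} {c β β₁ : ℝ}

theorem setIntegral_exp_neg_mul_le (hs : MeasurableSet s) (hβ : β₁ ≤ β) (hc : ∀ y ∈ s, c ≤ V y)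
    (hint : IntegrableOn (fun y => exp (-β * V y)) s μ)
    (hint₁ : IntegrableOn (fun y => exp (-β₁ * V y)) s μ) :
    ∫ y in s, exp (-β * V y) ∂μ ≤ exp (-(β - β₁) * c) * ∫ y in s, exp (-β₁ * V y) ∂μ := by
  rw [← integral_const_mul]
  refine setIntegral_mono_on hint (hint₁.const_mul _) hs fun y hy => ?_
  rw [exp_neg_mul_eq_mul_exp_neg_mul β β₁]
  exact mul_le_mul_of_nonneg_right (exp_le_exp.2 (by nlinarith [hc y hy])) (exp_pos _).le

theorem le_setIntegral_exp_neg_mul (hs : MeasurableSet s) (hβ : β₁ ≤ β) (hc : ∀ y ∈ s, V y ≤ c)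
    (hint : IntegrableOn (fun y => exp (-β * V y)) s μ)
    (hint₁ : IntegrableOn (fun y => exp (-β₁ * V y)) s μ) :
    exp (-(β - β₁) * c) * ∫ y in s, exp (-β₁ * V y) ∂μ ≤ ∫ y in s, exp (-β * V y) ∂μ := by
  rw [← integral_const_mul]
  refine setIntegral_mono_on (hint₁.const_mul _) hint hs fun y hy => ?_
  rw [exp_neg_mul_eq_mul_exp_neg_mul β β₁]
  exact mul_le_mul_of_nonneg_right (exp_le_exp.2 (by nlinarith [hc y hy])) (exp_pos _).le

theorem setIntegral_exp_div_integral_exp_le {W : Set X} {a b : ℝ} (hs : MeasurableSet s)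
    (hW : MeasurableSet W) (hβ : β₁ ≤ β) (hsV : ∀ y ∈ s, b ≤ V y) (hWV : ∀ y ∈ W, V y ≤ a)
    (hW₀ : 0 < ∫ y in W, exp (-β₁ * V y) ∂μ)
    (hint : Integrable (fun y => exp (-β * V y)) μ)
    (hint₁ : Integrable (fun y => exp (-β₁ * V y)) μ) :
    (∫ y in s, exp (-β * V y) ∂μ) / ∫ y, exp (-β * V y) ∂μ
      ≤ (∫ y in s, exp (-β₁ * V y) ∂μ) / (∫ y in W, exp (-β₁ * V y) ∂μ)
        * exp (-(β - β₁) * (b - a)) := by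
  set Cs := ∫ y in s, exp (-β₁ * V y) ∂μ
  set Cw := ∫ y in W, exp (-β₁ * V y) ∂μ
  have hZ : exp (-(β - β₁) * a) * Cw ≤ ∫ y, exp (-β * V y) ∂μ :=
    (le_setIntegral_exp_neg_mul hW hβ hWV hint.integrableOn hint₁.integrableOn).trans
      (setIntegral_le_integral hint (ae_of_all _ fun _ => (exp_pos _).le))
  rw [div_le_iff₀ ((by positivity : (0 : ℝ) < _).trans_le hZ)]
  calc ∫ y in s, exp (-β * V y) ∂μ ≤ exp (-(β - β₁) * b) * Cs :=
        setIntegral_exp_neg_mul_le hs hβ hsV hint.integrableOn hint₁.integrableOn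
    _ = Cs / Cw * exp (-(β - β₁) * (b - a)) * (exp (-(β - β₁) * a) * Cw) := by
        have : exp (-(β - β₁) * b) = exp (-(β - β₁) * (b - a)) * exp (-(β - β₁) * a) := by
          rw [← exp_add]; ring_nf
        rw [this]
        field_simp
    _ ≤ Cs / Cw * exp (-(β - β₁) * (b - a)) * ∫ y, exp (-β * V y) ∂μ := by
        have : 0 ≤ Cs := setIntegral_nonneg hs fun y _ => (exp_pos _).le
        gcongr

end GibbsWeights

theorem tendsto_setIntegral_exp_div_integral_exp_of_gap {X : Type*} [TopologicalSpace X]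
    [MeasurableSpace X] [OpensMeasurableSpace X] {μ : Measure X} [μ.IsOpenPosMeasure]
    {V : X → ℝ} (hV : Continuous V) {x : X} {s : Set X} (hs : MeasurableSet s) {m : ℝ}
    (hm : 0 < m) (hgap : ∀ y ∈ s, V x + m ≤ V y)
    (hint : ∀ᶠ β in atTop, Integrable (fun y => exp (-β * V y)) μ) :
    Tendsto (fun β => (∫ y in s, exp (-β * V y) ∂μ) / ∫ y, exp (-β * V y) ∂μ) atTop (𝓝 0) := by
  obtain ⟨β₁, hβ₁⟩ := eventually_atTop.1 hint
  set W := {y | V y < V x + m / 2}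
  have hW : IsOpen W := isOpen_lt hV continuous_const
  have hxW : x ∈ W := show V x < V x + m / 2 by linarith
  have : NeZero (μ.restrict W) := ⟨by simpa using hW.measure_ne_zero μ ⟨x, hxW⟩⟩
  set K := (∫ y in s, exp (-β₁ * V y) ∂μ) / ∫ y in W, exp (-β₁ * V y) ∂μ
  have hlim : Tendsto (fun β => K * exp (-(β - β₁) * (m / 2))) atTop (𝓝 0) := by
    have h := (tendsto_atTop_add_const_right atTop (-β₁) tendsto_id).atTop_mul_const
      (half_pos hm)
    have h' : Tendsto (fun β => -(β - β₁) * (m / 2)) atTop atBot :=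
      (tendsto_neg_atTop_atBot.comp h).congr fun β => by simp only [Function.comp, id]; ring
    simpa using (tendsto_exp_atBot.comp h').const_mul K
  refine tendsto_of_tendsto_of_tendsto_of_le_of_le' tendsto_const_nhds hlim
    (Eventually.of_forall fun β => ?_) ((eventually_ge_atTop β₁).mono fun β hβ => ?_)
  · exact div_nonneg (setIntegral_nonneg hs fun y _ => (exp_pos _).le)
      (integral_nonneg fun y => (exp_pos _).le)
  · have := setIntegral_exp_div_integral_exp_le hs hW.measurableSet hβ hgap
      (fun y hy => le_of_lt hy) (integral_exp_pos (hβ₁ β₁ le_rfl).integrableOn) (hβ₁ β hβ)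
      (hβ₁ β₁ le_rfl)
    rwa [show V x + m - (V x + m / 2) = m / 2 by ring] at this

theorem abs_integral_mul_le_add_setIntegral_compl {X : Type*} [MeasurableSpace X]
    {μ : Measure X} {g w : X → ℝ} (hg : AEStronglyMeasurable g μ) (hw : ∀ y, 0 ≤ w y)
    (hwi : Integrable w μ) {U : Set X} (hU : MeasurableSet U) {η B : ℝ} (hη : 0 ≤ η)
    (hgU : ∀ y ∈ U, |g y| ≤ η) (hgB : ∀ y, |g y| ≤ B) :
    |∫ y, g y * w y ∂μ| ≤ η * ∫ y, w y ∂μ + B * ∫ y in Uᶜ, w y ∂μ := by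
  have hgw : Integrable (fun y => |g y| * w y) μ :=
    hwi.bdd_mul hg.norm (ae_of_all _ fun y => by simpa using hgB y)
  calc |∫ y, g y * w y ∂μ| ≤ ∫ y, |g y * w y| ∂μ := abs_integral_le_integral_abs
    _ = ∫ y, |g y| * w y ∂μ := by simp only [abs_mul, abs_of_nonneg (hw _)]
    _ ≤ ∫ y, (η * w y + B * Uᶜ.indicator w y) ∂μ := by
        refine integral_mono hgw ((hwi.const_mul η).add ((hwi.indicator hU.compl).const_mul B))
          fun y => ?_
        by_cases hy : y ∈ U
        · simp only [Set.indicator_of_notMem (Set.notMem_compl_iff.2 hy), mul_zero, add_zero]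
          exact mul_le_mul_of_nonneg_right (hgU y hy) (hw y)
        · rw [Set.indicator_of_mem (Set.mem_compl hy)]
          nlinarith [hgB y, hw y, mul_le_mul_of_nonneg_right (hgB y) (hw y)]
    _ = η * ∫ y, w y ∂μ + B * ∫ y in Uᶜ, w y ∂μ := by
        rw [integral_add (hwi.const_mul η) ((hwi.indicator hU.compl).const_mul B),
          integral_const_mul, integral_const_mul, integral_indicator hU.compl]

theorem tendsto_integral_mul_div_integral_of_concentrates {ι X : Type*} [TopologicalSpace X]
    [MeasurableSpace X] [OpensMeasurableSpace X] {μ : Measure X} {l : Filter ι}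
    {w : ι → X → ℝ} (hw : ∀ i y, 0 ≤ w i y) (hwi : ∀ᶠ i in l, Integrable (w i) μ)
    (hZ : ∀ᶠ i in l, 0 < ∫ y, w i y ∂μ) {x : X}
    (hconc : ∀ U, IsOpen U → x ∈ U →
      Tendsto (fun i => (∫ y in Uᶜ, w i y ∂μ) / ∫ y, w i y ∂μ) l (𝓝 0))
    {f : X → ℝ} (hfm : AEStronglyMeasurable f μ) (hfx : ContinuousAt f x) {M : ℝ}
    (hM : ∀ y, |f y| ≤ M) :
    Tendsto (fun i => (∫ y, f y * w i y ∂μ) / ∫ y, w i y ∂μ) l (𝓝 (f x)) := by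
  rw [Metric.tendsto_nhds]
  intro η hη
  set U := interior (f ⁻¹' Metric.ball (f x) (η / 2))
  have hxU : x ∈ U := mem_interior_iff_mem_nhds.2 (hfx (Metric.ball_mem_nhds _ (half_pos hη)))
  have hnear : ∀ y ∈ U, |f y - f x| ≤ η / 2 := fun y hy => by
    have hy := interior_subset hy
    rw [Set.mem_preimage, Metric.mem_ball, Real.dist_eq] at hy
    exact hy.le
  have htail := ((hconc U isOpen_interior hxU).const_mul (2 * M)).eventually
    (gt_mem_nhds (show 2 * M * 0 < η / 2 by linarith))
  filter_upwards [hwi, hZ, htail] with i hwi hZ htail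
  have hbound := abs_integral_mul_le_add_setIntegral_compl (g := fun y => f y - f x)
    (B := 2 * M) (hfm.sub aestronglyMeasurable_const) (hw i) hwi
    isOpen_interior.measurableSet (half_pos hη).le hnear
    (fun y => (abs_sub _ _).trans (by linarith [hM y, hM x]))
  have hfw : Integrable (fun y => f y * w i y) μ :=
    hwi.bdd_mul hfm (ae_of_all _ fun y => by simpa using hM y)
  have hcentre : ∫ y, (f y - f x) * w i y ∂μ = ∫ y, f y * w i y ∂μ - f x * ∫ y, w i y ∂μ := by
    simp only [sub_mul]
    rw [integral_sub hfw (hwi.const_mul _), integral_const_mul]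
  rw [Real.dist_eq]
  calc |(∫ y, f y * w i y ∂μ) / ∫ y, w i y ∂μ - f x|
      = |∫ y, (f y - f x) * w i y ∂μ| / ∫ y, w i y ∂μ := by
        rw [hcentre, div_sub' hZ.ne', abs_div, abs_of_pos hZ, mul_comm]
    _ ≤ (η / 2 * ∫ y, w i y ∂μ + 2 * M * ∫ y in Uᶜ, w i y ∂μ) / ∫ y, w i y ∂μ := by gcongr
    _ = η / 2 + 2 * M * ((∫ y in Uᶜ, w i y ∂μ) / ∫ y, w i y ∂μ) := by field_simp
    _ < η := by linarith

/-- Laplace/Gibbs limit: if `V` is continuous, coercive, with unique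
global minimizer `x*`, and `∫ e^{−V/ε}` is finite for all small `ε > 0`, then the Gibbs
measures `π_ε ∝ e^{−V/ε}` converge weakly to `δ_{x*}` as `ε → 0⁺`: for every bounded
continuous `f`, `∫ f dπ_ε → f(x*)`. -/
theorem stmt19 {d : ℕ} (V : EuclideanSpace ℝ (Fin d) → ℝ) (hVcont : Continuous V)
    (hVcoer : Tendsto V (cocompact (EuclideanSpace ℝ (Fin d))) atTop)
    (xstar : EuclideanSpace ℝ (Fin d))
    (hmin : ∀ y, y ≠ xstar → V xstar < V y)
    (ε₀ : ℝ) (hε₀ : 0 < ε₀)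
    (hint : ∀ ε : ℝ, 0 < ε → ε < ε₀ → Integrable (fun y => Real.exp (-V y / ε))) :
    ∀ f : EuclideanSpace ℝ (Fin d) → ℝ, Continuous f → (∃ M, ∀ y, |f y| ≤ M) →
      Tendsto (fun ε : ℝ =>
          (∫ y, f y * Real.exp (-V y / ε)) / ∫ y, Real.exp (-V y / ε))
        (nhdsWithin 0 (Set.Ioi 0)) (nhds (f xstar)) := by
  rintro f hf ⟨M, hM⟩
  have hint' : ∀ᶠ β in atTop, Integrable (fun y => exp (-β * V y)) := by
    filter_upwards [eventually_gt_atTop ε₀⁻¹] with β hβ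
    have hβpos : 0 < β := (inv_pos.2 hε₀).trans hβ
    simpa [div_inv_eq_mul, mul_comm] using
      hint β⁻¹ (inv_pos.2 hβpos) (inv_lt_of_inv_lt₀ hε₀ hβ)
  have hconc : ∀ U, IsOpen U → xstar ∈ U → Tendsto (fun β =>
      (∫ y in Uᶜ, exp (-β * V y)) / ∫ y, exp (-β * V y)) atTop (𝓝 0) := by
    intro U hU hxU
    obtain ⟨m, hm, hgap⟩ :=
      exists_pos_add_le_of_tendsto_cocompact hVcont hVcoer hmin (hU.mem_nhds hxU)
    exact tendsto_setIntegral_exp_div_integral_exp_of_gap hVcont hU.measurableSet.compl hm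
      hgap hint'
  have hlim := (tendsto_integral_mul_div_integral_of_concentrates (fun β y => (exp_pos _).le)
    hint' (hint'.mono fun β h => integral_exp_pos h) hconc hf.aestronglyMeasurable
    hf.continuousAt hM).comp tendsto_inv_nhdsGT_zero
  refine hlim.congr fun ε => ?_
  simp only [Function.comp, neg_mul, inv_mul_eq_div, neg_div]
end
end
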